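/- For every nontrivial braid b in B_3^+, there exists C ∈ {0, 1, 2} such that ‖b‖ = |b| − p − d(b) + C, where p is the breadth of b and d(b) is the maximal d ≥ 0 such that Δ3^d is a right divisor of b. -/

import Mathlib

/-!
Positive 3-braids have a left-greedy normal form Δ^inf · sₘ ⋯ s₁ whose factors are among
σ₁, σ₂, σ₁σ₂, σ₂σ₁. Right multiplication by a letter only changes the rightmost factor, or, when
it completes a Δ, moves that Δ to the far left, flipping the factors it crosses. This procedure
respects the braid relation, so it computes the normal form from any word, and the normal form
gives ‖b‖ = inf + m and d(b) = inf. Hence ‖b‖ + d(b) is the weight 2·inf + m.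

Reading a word letter by letter, each letter raises the weight by one, except when it turns a
factor σ_{i'} into σ_{i'}σᵢ. In a block of equal letters this happens at most once, so
|b| − p ≤ ‖b‖ + d(b). In a ϕ-normal word it happens at the start of every block but the first
and the last, because the conditions e_k ≥ e_k^min make each earlier block end with a one-letter
factor; so ‖b‖ + d(b) ≤ |b| − p + 2.
-/

namespace Braid3

/-! ### The positive 3-strand braid monoid
presented by σ1, σ2 (letters `0`, `1` of `Fin 2`) with the relation σ1σ2σ1 = σ2σ1σ2. -/

def braidRel : FreeMonoid (Fin 2) → FreeMonoid (Fin 2) → Prop := fun u v =>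
  u = FreeMonoid.of 0 * FreeMonoid.of 1 * FreeMonoid.of 0 ∧
  v = FreeMonoid.of 1 * FreeMonoid.of 0 * FreeMonoid.of 1

def braidCon : Con (FreeMonoid (Fin 2)) := conGen braidRel

/-- The positive 3-strand braid monoid `B₃⁺`. -/
abbrev B3P := braidCon.Quotient

/-- The element of `B₃⁺` represented by a word on the alphabet {σ1, σ2}. -/
def mkw (w : List (Fin 2)) : B3P := braidCon.mk' (FreeMonoid.ofList w)

/-- σ1 as an element of B₃⁺. -/
def s1 : B3P := mkw [0]
/-- σ2 as an element of B₃⁺. -/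
def s2 : B3P := mkw [1]
/-- Garside's fundamental braid Δ₃ = σ1σ2σ1. -/
def Δ : B3P := mkw [0, 1, 0]

/-! ### The 3-strand braid group B₃, with the same presentation. -/

def grpRels : Set (FreeGroup (Fin 2)) :=
  { FreeGroup.of 0 * FreeGroup.of 1 * FreeGroup.of 0 *
    (FreeGroup.of 1 * FreeGroup.of 0 * FreeGroup.of 1)⁻¹ }

abbrev B3 := PresentedGroup grpRels

def g (i : Fin 2) : B3 := PresentedGroup.of i

theorem grp_braid_rel : g 0 * g 1 * g 0 = g 1 * g 0 * g 1 := by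
  show (QuotientGroup.mk (FreeGroup.of 0 * FreeGroup.of 1 * FreeGroup.of 0) : B3)
      = QuotientGroup.mk (FreeGroup.of 1 * FreeGroup.of 0 * FreeGroup.of 1)
  rw [QuotientGroup.eq]
  have h : (FreeGroup.of 0 * FreeGroup.of 1 * FreeGroup.of 0 *
      (FreeGroup.of 1 * FreeGroup.of 0 * FreeGroup.of 1)⁻¹ : FreeGroup (Fin 2)) ∈
      Subgroup.normalClosure grpRels :=
    Subgroup.subset_normalClosure rfl
  have h2 := (Subgroup.normalClosure_normal (s := grpRels)).conj_mem _ h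
      (FreeGroup.of 0 * FreeGroup.of 1 * FreeGroup.of 0)⁻¹
  simp only [inv_inv] at h2
  have h3 : ((FreeGroup.of 0 * FreeGroup.of 1 * FreeGroup.of 0 : FreeGroup (Fin 2)))⁻¹ *
      (FreeGroup.of 0 * FreeGroup.of 1 * FreeGroup.of 0 *
        (FreeGroup.of 1 * FreeGroup.of 0 * FreeGroup.of 1)⁻¹) *
      (FreeGroup.of 0 * FreeGroup.of 1 * FreeGroup.of 0) =
      ((FreeGroup.of 0 * FreeGroup.of 1 * FreeGroup.of 0 : FreeGroup (Fin 2))⁻¹ *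
        (FreeGroup.of 1 * FreeGroup.of 0 * FreeGroup.of 1))⁻¹ := by
    group
  rw [h3] at h2
  exact (Subgroup.inv_mem_iff _).mp h2

/-- The canonical embedding of B₃⁺ into B₃. -/
def ι : B3P →* B3 :=
  Con.lift _ (FreeMonoid.lift fun i => g i) (by
    apply Con.conGen_le.mpr
    rintro u v ⟨hu, hv⟩
    subst hu; subst hv
    rw [Con.ker_rel]
    simp only [map_mul, FreeMonoid.lift_eval_of]
    exact grp_braid_rel)

/-! ### The braid order -/

/-- Evaluation in B₃ of a word on the letters σ1^{±1}, σ2^{±1}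
(a letter `(i, true)` is σ_{i+1}, a letter `(i, false)` is σ_{i+1}⁻¹). -/
def evalSW (w : List (Fin 2 × Bool)) : B3 :=
  (w.map fun l => if l.2 then g l.1 else (g l.1)⁻¹).prod

/-- A signed word is σ-positive if the generator of highest occurring index occurs,
and occurs only positively. -/
def SigmaPos (w : List (Fin 2 × Bool)) : Prop :=
  ∃ i : Fin 2, (i, true) ∈ w ∧ (i, false) ∉ w ∧ ∀ l ∈ w, l.1 ≤ i

/-- The braid order on the group B₃. -/
def gLt (a b : B3) : Prop := ∃ w, SigmaPos w ∧ evalSW w = a⁻¹ * b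

/-- The braid order on B₃⁺. -/
def blt (a b : B3P) : Prop := gLt (ι a) (ι b)

def ble (a b : B3P) : Prop := blt a b ∨ a = b

/-! ### ϕ-normal words and exponent sequences -/

/-- The minimal legal sizes e_k^min. -/
def emin : ℕ → ℕ
  | 1 => 0
  | 2 => 1
  | _ => 2

/-- The letter of the k-th block (1-based, from the right): σ1 for odd k, σ2 for even k. -/
def letterOf (k : ℕ) : Fin 2 := if k % 2 = 1 then 0 else 1

/-- The word σ_{[p]}^{e_p} ⋯ σ2^{e_2} σ1^{e_1} associated with the exponent
sequence `E = [e_p, …, e_1]`. -/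
def wordOfExpSeq : List ℕ → List (Fin 2)
  | [] => []
  | e :: rest => List.replicate e (letterOf (rest.length + 1)) ++ wordOfExpSeq rest

/-- `expAt E k` is e_k, the k-th entry of the exponent sequence counted from the right,
1-based. -/
def expAt (E : List ℕ) (k : ℕ) : ℕ := E.getD (E.length - k) 0

/-- `E = [e_p, …, e_1]` is the exponent sequence of a ϕ-normal word: the final block
decomposition is minimal (leading exponent nonzero) and e_k ≥ e_k^min for k < p. -/
def IsNormalSeq (E : List ℕ) : Prop :=
  E ≠ [] ∧ 1 ≤ expAt E E.length ∧ ∀ k, 1 ≤ k → k < E.length → emin k ≤ expAt E k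

/-- A word on {σ1, σ2} is ϕ-normal if its (minimal) block decomposition
σ_{[p]}^{e_p} ⋯ σ2^{e_2} σ1^{e_1} satisfies e_k ≥ e_k^min for k < p. -/
def IsPhiNormalWord (w : List (Fin 2)) : Prop :=
  ∃ E, IsNormalSeq E ∧ w = wordOfExpSeq E

/-- `E` is the exponent sequence of the braid `b`. -/
def HasExpSeq (b : B3P) (E : List ℕ) : Prop :=
  IsNormalSeq E ∧ mkw (wordOfExpSeq E) = b

/-- The exponent sequence of a (nontrivial) braid of B₃⁺. -/
noncomputable def expSeqOf (b : B3P) : List ℕ := by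
  classical exact if h : ∃ E, HasExpSeq b E then h.choose else []

/-- The critical position of an exponent sequence: the least r < p with e_r > e_r^min
if it exists, and p otherwise. -/
noncomputable def critPos (E : List ℕ) : ℕ := by
  classical exact
    if h : ∃ r, 1 ≤ r ∧ r < E.length ∧ emin r < expAt E r then Nat.find h else E.length

/-- The effect of the operation b ↦ b{t} on exponent sequences: remove one letter from
the critical block, and add t letters to the next block if the latter exists. -/
noncomputable def stepSeq (E : List ℕ) (t : ℕ) : List ℕ :=
  let p := E.length
  let r := critPos E
  let E1 := E.set (p - r) (expAt E r - 1)
  if 2 ≤ r then E1.set (p - (r - 1)) (expAt E (r - 1) + t) else E1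

/-- The operation b ↦ b{t} of Definition 2.2 (with 1{t} = 1). -/
noncomputable def step (b : B3P) (t : ℕ) : B3P := by
  classical exact if b = 1 then 1 else mkw (wordOfExpSeq (stepSeq (expSeqOf b) t))

/-- The G₃-sequence from b: `gseq b 0 = b`, `gseq b t = (gseq b (t-1)){t}`. -/
noncomputable def gseq (b : B3P) : ℕ → B3P
  | 0 => b
  | t + 1 => step (gseq b t) (t + 1)

/-- T(b): the length of the G₃-sequence from b, i.e. the least t with b{1}{2}⋯{t} = 1. -/
noncomputable def T (b : B3P) : ℕ := sInf {t | gseq b t = 1}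

/-! ### The ordinal of a 3-braid, fundamental sequences, the Hardy hierarchy -/

open Ordinal in
/-- Sum Σ ω^{k-1}·(e_k − e_k^min) over the tail of an exponent sequence. -/
noncomputable def ordSeqAux : List ℕ → Ordinal
  | [] => 0
  | e :: rest =>
    omega0 ^ (rest.length : Ordinal) * ((e - emin (rest.length + 1) : ℕ) : Ordinal)
      + ordSeqAux rest

open Ordinal in
/-- ord of an exponent sequence (e_p, …, e_1):
ω^{p−1}·e_p + Σ_{p>k≥1} ω^{k−1}·(e_k − e_k^min). -/
noncomputable def ordSeq : List ℕ → Ordinal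
  | [] => 0
  | e :: rest => omega0 ^ (rest.length : Ordinal) * (e : Ordinal) + ordSeqAux rest

/-- The ordinal ord(b) < ω^ω attached to a braid of B₃⁺ (with ord(1) = 0). -/
noncomputable def ordOf (b : B3P) : Ordinal := ordSeq (expSeqOf b)

open Ordinal in
/-- Fundamental sequences: 0[x] = 0, (α+1)[x] = α, (γ + ω^{r+1})[x] = γ + ω^r·x
(CNF decomposition), and (ω^ω)[x] = ω^x. -/
noncomputable def fundSeq (α : Ordinal) (x : ℕ) : Ordinal :=
  open scoped Classical in
  if α = 0 then 0
  else if h : ∃ β, α = β + 1 then h.choose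
  else if α = omega0 ^ omega0 then omega0 ^ (x : Ordinal)
  else if h : ∃ p : Ordinal × ℕ, α = p.1 + omega0 ^ ((p.2 : Ordinal) + 1) ∧
      omega0 ^ ((p.2 : Ordinal) + 1) ∣ p.1
    then h.choose.1 + omega0 ^ (h.choose.2 : Ordinal) * (x : Ordinal)
  else 0

open Ordinal in
theorem fundSeq_lt (α : Ordinal) (x : ℕ) (h0 : ¬α = 0) (hs : ¬∃ β, α = β + 1) :
    fundSeq α x < α := by
  classical
  rw [fundSeq]
  rw [if_neg h0, dif_neg hs]
  by_cases hw : α = omega0 ^ omega0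
  · rw [if_pos hw, hw]
    exact (Ordinal.opow_lt_opow_iff_right Ordinal.one_lt_omega0).mpr (Ordinal.nat_lt_omega0 x)
  · rw [if_neg hw]
    by_cases hd : ∃ p : Ordinal × ℕ, α = p.1 + omega0 ^ ((p.2 : Ordinal) + 1) ∧
        omega0 ^ ((p.2 : Ordinal) + 1) ∣ p.1
    · rw [dif_pos hd]
      obtain ⟨hα, -⟩ := hd.choose_spec
      have hlt : omega0 ^ ((hd.choose.2 : Ordinal)) * (x : Ordinal)
          < omega0 ^ ((hd.choose.2 : Ordinal) + 1) := by
        rw [Ordinal.add_one_eq_succ, Ordinal.opow_succ]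
        exact (mul_lt_mul_iff_right₀
          (Ordinal.opow_pos _ Ordinal.omega0_pos)).mpr (Ordinal.nat_lt_omega0 x)
      calc hd.choose.1 + omega0 ^ (hd.choose.2 : Ordinal) * (x : Ordinal)
          < hd.choose.1 + omega0 ^ ((hd.choose.2 : Ordinal) + 1) :=
            (add_lt_add_iff_left _).mpr hlt
        _ = α := hα.symm
    · rw [dif_neg hd]
      exact pos_iff_ne_zero.mpr h0

open Ordinal in
open scoped Classical in
/-- The Hardy hierarchy: H_0(x) = x, H_{α+1}(x) = H_α(x+1), H_λ(x) = H_{λ[x]}(x+1). -/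
noncomputable def hardy (α : Ordinal) (x : ℕ) : ℕ :=
  if α = 0 then x
  else if h : ∃ β, α = β + 1 then hardy h.choose (x + 1)
  else hardy (fundSeq α x) (x + 1)
termination_by α
decreasing_by
  · have hs := h.choose_spec
    have h2 : h.choose < h.choose + 1 := by
      rw [Ordinal.add_one_eq_succ]; exact Order.lt_succ _
    exact lt_of_lt_of_eq h2 hs.symm
  · exact fundSeq_lt _ _ (by assumption) (by assumption)

/-! ### Garside complexity -/

/-- The Garside complexity ‖b‖: the least ℓ such that b left-divides Δ₃^ℓ. -/
noncomputable def compl (b : B3P) : ℕ := sInf {ℓ | ∃ c, b * c = Δ ^ ℓ}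

theorem mkw_nil : mkw [] = 1 := rfl

theorem mkw_append (u v : List (Fin 2)) : mkw (u ++ v) = mkw u * mkw v := by
  simp only [mkw, FreeMonoid.ofList_append, map_mul]

theorem mkw_cons (i : Fin 2) (u : List (Fin 2)) : mkw (i :: u) = mkw [i] * mkw u :=
  mkw_append [i] u

theorem exists_mkw_eq (b : B3P) : ∃ u, mkw u = b := by
  obtain ⟨m, rfl⟩ := Con.mk'_surjective (c := braidCon) b
  exact ⟨m.toList, by rw [mkw, FreeMonoid.ofList_toList]⟩

theorem mkw_alternating (i : Fin 2) : mkw [i, i.rev, i] = Δ := by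
  fin_cases i
  · rfl
  · exact ((Con.eq braidCon).mpr (ConGen.Rel.of _ _ ⟨rfl, rfl⟩)).symm

theorem mkw_mul_delta (u : List (Fin 2)) : mkw u * Δ = Δ * mkw (u.map Fin.rev) := by
  induction u with
  | nil => simp [mkw_nil]
  | cons i u ih =>
    have hi : mkw [i] * Δ = Δ * mkw [i.rev] := by
      calc mkw [i] * Δ = mkw ([i] ++ [i.rev, i.rev.rev, i.rev]) := by
            rw [mkw_append, mkw_alternating]
        _ = Δ * mkw [i.rev] := by rw [Fin.rev_rev, ← mkw_alternating i, ← mkw_append]; rfl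
    rw [mkw_cons, mul_assoc, ih, ← mul_assoc, hi, mul_assoc, ← mkw_cons, List.map_cons]

theorem delta_mul_mkw (u : List (Fin 2)) : Δ * mkw u = mkw (u.map Fin.rev) * Δ := by
  simpa [Function.comp_def] using (mkw_mul_delta (u.map Fin.rev)).symm

theorem exists_mul_delta_eq (y : B3P) : ∃ z, y * Δ = Δ * z := by
  obtain ⟨u, rfl⟩ := exists_mkw_eq y
  exact ⟨_, mkw_mul_delta u⟩

theorem exists_delta_pow_mul_eq (k : ℕ) (y : B3P) : ∃ z, Δ ^ k * y = z * Δ ^ k := by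
  induction k generalizing y with
  | zero => exact ⟨y, by simp⟩
  | succ k ih =>
    obtain ⟨u, rfl⟩ := exists_mkw_eq y
    obtain ⟨z, hz⟩ := ih (mkw (u.map Fin.rev))
    exact ⟨z, by rw [pow_succ, mul_assoc, delta_mul_mkw, ← mul_assoc, hz, mul_assoc]⟩

theorem mul_dvd_delta_pow_succ {x s : B3P} {n : ℕ} (hx : x ∣ Δ ^ n) (hs : s ∣ Δ) :
    x * s ∣ Δ ^ (n + 1) := by
  obtain ⟨c, hc⟩ := hx
  obtain ⟨t, ht⟩ := hs
  obtain ⟨c', hc'⟩ := exists_mul_delta_eq c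
  exact ⟨t * c', by rw [pow_succ, hc, mul_assoc, hc', ht]; simp only [mul_assoc]⟩

theorem eq_rev_of_ne {i j : Fin 2} (h : j ≠ i) : j = i.rev := by
  revert i j
  decide

theorem rev_ne_self (i : Fin 2) : i.rev ≠ i := by
  revert i
  decide

/-- The simple braids other than 1 and Δ, by their last letter: `single i` is σᵢ and
`double i` is σ_{i.rev} σᵢ. -/
inductive Factor
  | single (i : Fin 2)
  | double (i : Fin 2)

namespace Factor

def word : Factor → List (Fin 2)
  | single i => [i]
  | double i => [i.rev, i]

def first : Factor → Fin 2
  | single i => i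
  | double i => i.rev

def last : Factor → Fin 2
  | single i | double i => i

def flip : Factor → Factor
  | single i => single i.rev
  | double i => double i.rev

theorem word_flip (s : Factor) : s.flip.word = s.word.map Fin.rev := by
  cases s <;> rfl

theorem first_flip (s : Factor) : s.flip.first = s.first.rev := by
  cases s <;> rfl

theorem last_flip (s : Factor) : s.flip.last = s.last.rev := by
  cases s <;> rfl

theorem mkw_word_dvd_delta (s : Factor) : mkw s.word ∣ Δ := by
  cases s with
  | single i => exact ⟨mkw [i.rev, i], by rw [← mkw_append]; exact (mkw_alternating i).symm⟩
  | double i =>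
    refine ⟨mkw [i.rev], ?_⟩
    rw [← mkw_append, ← mkw_alternating i.rev, Fin.rev_rev]
    rfl

end Factor

open Factor

/-- The head of the list is the rightmost factor. -/
def evalFactors : List Factor → B3P
  | [] => 1
  | s :: L => evalFactors L * mkw s.word

theorem evalFactors_mul_delta (L : List Factor) :
    evalFactors L * Δ = Δ * evalFactors (L.map Factor.flip) := by
  induction L with
  | nil => simp [evalFactors]
  | cons s L ih =>
    rw [evalFactors, mul_assoc, mkw_mul_delta, ← mul_assoc, ih, mul_assoc, List.map_cons,
      evalFactors, word_flip]

theorem evalFactors_dvd_delta_pow (L : List Factor) : evalFactors L ∣ Δ ^ L.length := by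
  induction L with
  | nil => simp [evalFactors]
  | cons s L ih => exact mul_dvd_delta_pow_succ ih (mkw_word_dvd_delta s)

/-- For simple braids t, s other than 1 and Δ, the product t · s is left-weighted iff s starts
with the letter that t ends with. -/
def Admissible (L : List Factor) : Prop := L.IsChain fun s t => t.last = s.first

theorem admissible_nil : Admissible [] := List.isChain_nil

theorem Admissible.map_flip {L : List Factor} (h : Admissible L) :
    Admissible (L.map Factor.flip) :=
  List.isChain_map_of_isChain _ (fun s t hst => by rw [last_flip, first_flip, hst]) h

/-- `⟨k, [s₁, …, sₘ]⟩` stands for Δ^k · sₘ ⋯ s₁, a left-greedy normal form when the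
factors are `Admissible`. -/
structure NormalForm where
  inf : ℕ
  factors : List Factor

namespace NormalForm

def eval (x : NormalForm) : B3P := Δ ^ x.inf * evalFactors x.factors

def sup (x : NormalForm) : ℕ := x.inf + x.factors.length

def weight (x : NormalForm) : ℕ := x.sup + x.inf

def mulGen : NormalForm → Fin 2 → NormalForm
  | ⟨k, []⟩, i => ⟨k, [single i]⟩
  | ⟨k, single j :: L⟩, i =>
    if j = i then ⟨k, single i :: single j :: L⟩ else ⟨k, double i :: L⟩
  | ⟨k, double j :: L⟩, i =>
    -- σ_{j.rev} σ_j σ_{j.rev} = Δ, which is moved to the far left, flipping what it crosses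
    if j = i then ⟨k, single i :: double j :: L⟩ else ⟨k + 1, L.map Factor.flip⟩

def mulWord (x : NormalForm) (w : List (Fin 2)) : NormalForm := w.foldl mulGen x

def ofWord (w : List (Fin 2)) : NormalForm := mulWord ⟨0, []⟩ w

@[simp]
theorem mulWord_nil (x : NormalForm) : x.mulWord [] = x := rfl

@[simp]
theorem mulWord_cons (x : NormalForm) (i : Fin 2) (w : List (Fin 2)) :
    x.mulWord (i :: w) = (x.mulGen i).mulWord w := rfl

theorem mulWord_append (x : NormalForm) (u v : List (Fin 2)) :
    x.mulWord (u ++ v) = (x.mulWord u).mulWord v :=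
  List.foldl_append ..

theorem admissible_mulGen {x : NormalForm} (hx : Admissible x.factors) (i : Fin 2) :
    Admissible (x.mulGen i).factors := by
  obtain ⟨k, _ | ⟨s, L⟩⟩ := x
  · exact List.isChain_singleton _
  · have hL : Admissible L := hx.tail
    rcases s with j | j <;> by_cases hj : j = i
    · subst hj
      simp only [mulGen, ↓reduceIte]
      exact List.IsChain.cons_cons rfl hx
    · simp only [mulGen, hj, if_false]
      refine List.isChain_cons.mpr ⟨fun t ht => ?_, hL⟩
      rw [(List.isChain_cons.mp hx).1 t ht, first, first, eq_rev_of_ne hj]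
    · subst hj
      simp only [mulGen, ↓reduceIte]
      exact List.IsChain.cons_cons rfl hx
    · simpa [mulGen, hj] using hL.map_flip

theorem admissible_mulWord {x : NormalForm} (hx : Admissible x.factors) (w : List (Fin 2)) :
    Admissible (x.mulWord w).factors := by
  induction w generalizing x with
  | nil => exact hx
  | cons i w ih => exact ih (admissible_mulGen hx i)

end NormalForm

namespace NormalForm

theorem mulWord_alternating {x : NormalForm} (hx : Admissible x.factors) (i : Fin 2) :
    x.mulWord [i, i.rev, i] = ⟨x.inf + 1, x.factors.map Factor.flip⟩ := by
  obtain ⟨k, _ | ⟨s, _ | ⟨t, L⟩⟩⟩ := x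
  · fin_cases i <;> rfl
  · rcases s with j | j <;> fin_cases i <;> fin_cases j <;> rfl
  · have hts : t.last = s.first := (List.isChain_cons_cons.mp hx).1
    rcases s with j | j <;> rcases t with l | l <;> fin_cases i <;> fin_cases j <;> fin_cases l <;>
      first | rfl | (simp [first, last] at hts)

theorem eval_mulGen (x : NormalForm) (i : Fin 2) : (x.mulGen i).eval = x.eval * mkw [i] := by
  obtain ⟨k, _ | ⟨s, L⟩⟩ := x
  · simp [mulGen, eval, evalFactors, word]
  · rcases s with j | j <;> by_cases hj : j = i
    · subst hj
      simp [mulGen, eval, evalFactors, word, mul_assoc]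
    · simp only [mulGen, hj, if_false, eval, evalFactors, word]
      rw [eq_rev_of_ne hj, mul_assoc, mul_assoc, ← mkw_append]
      rfl
    · subst hj
      simp [mulGen, eval, evalFactors, word, mul_assoc]
    · have hi : i = j.rev := eq_rev_of_ne (Ne.symm hj)
      simp only [mulGen, hj, if_false, eval, evalFactors, word]
      have hΔ : mkw [j.rev, j, j.rev] = Δ := by simpa using mkw_alternating j.rev
      rw [mul_assoc, mul_assoc, ← mkw_append, hi, List.cons_append, List.cons_append,
        List.nil_append, hΔ, evalFactors_mul_delta, pow_succ, mul_assoc]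

theorem eval_mulWord (x : NormalForm) (w : List (Fin 2)) :
    (x.mulWord w).eval = x.eval * mkw w := by
  induction w generalizing x with
  | nil => simp [mkw_nil]
  | cons i w ih => rw [mulWord_cons, ih, eval_mulGen, mul_assoc, ← mkw_cons]

theorem eval_ofWord (w : List (Fin 2)) : (ofWord w).eval = mkw w := by
  rw [ofWord, eval_mulWord]
  simp [eval, evalFactors]

def actionCon : Con (FreeMonoid (Fin 2)) where
  r u v := ∀ x : NormalForm, Admissible x.factors → x.mulWord u.toList = x.mulWord v.toList
  iseqv :=
    { refl := fun _ _ _ => rfl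
      symm := fun h x hx => (h x hx).symm
      trans := fun h₁ h₂ x hx => (h₁ x hx).trans (h₂ x hx) }
  mul' := by
    intro u u' v v' hu hv x hx
    simp only [FreeMonoid.toList_mul, mulWord_append, hu x hx,
      hv _ (admissible_mulWord hx _)]

theorem mulWord_eq_of_mkw_eq {u v : List (Fin 2)} (h : mkw u = mkw v) {x : NormalForm}
    (hx : Admissible x.factors) : x.mulWord u = x.mulWord v := by
  have hle : braidCon ≤ actionCon := by
    refine Con.conGen_le.mpr ?_
    rintro _ _ ⟨rfl, rfl⟩ y hy
    exact (mulWord_alternating hy 0).trans (mulWord_alternating hy 1).symm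
  simpa using hle ((Con.eq braidCon).mp h) x hx

theorem ofWord_eq_of_mkw_eq {u v : List (Fin 2)} (h : mkw u = mkw v) : ofWord u = ofWord v :=
  mulWord_eq_of_mkw_eq h admissible_nil

theorem admissible_ofWord (w : List (Fin 2)) : Admissible (ofWord w).factors :=
  admissible_mulWord admissible_nil w

theorem ofWord_append (u v : List (Fin 2)) : ofWord (u ++ v) = (ofWord u).mulWord v :=
  mulWord_append _ u v

theorem sup_le_sup_mulGen (x : NormalForm) (i : Fin 2) : x.sup ≤ (x.mulGen i).sup := by
  obtain ⟨k, _ | ⟨s, L⟩⟩ := x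
  · simp [mulGen, sup]
  · rcases s with j | j <;> by_cases hj : j = i <;>
      simp only [mulGen, sup, hj, if_true, if_false, List.length_cons, List.length_map] <;> omega

theorem sup_le_sup_mulWord (x : NormalForm) (w : List (Fin 2)) : x.sup ≤ (x.mulWord w).sup := by
  induction w generalizing x with
  | nil => exact le_rfl
  | cons i w ih => exact (sup_le_sup_mulGen x i).trans (ih _)

def deltaWord (ℓ : ℕ) : List (Fin 2) := (List.replicate ℓ [0, 1, 0]).flatten

theorem mkw_deltaWord (ℓ : ℕ) : mkw (deltaWord ℓ) = Δ ^ ℓ := by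
  induction ℓ with
  | zero => rfl
  | succ ℓ ih =>
    rw [deltaWord, List.replicate_succ, List.flatten_cons, mkw_append, ← deltaWord, ih, pow_succ']
    rfl

theorem mulWord_deltaWord {x : NormalForm} (hx : Admissible x.factors) (ℓ : ℕ) :
    x.mulWord (deltaWord ℓ) = ⟨x.inf + ℓ, x.factors.map Factor.flip^[ℓ]⟩ := by
  induction ℓ generalizing x with
  | zero => simp [deltaWord]
  | succ ℓ ih =>
    rw [deltaWord, List.replicate_succ, List.flatten_cons, mulWord_append, ← deltaWord,
      show x.mulWord [0, 1, 0] = _ from mulWord_alternating hx 0, ih hx.map_flip, List.map_map,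
      Function.iterate_succ, NormalForm.mk.injEq]
    exact ⟨Nat.add_right_comm .., rfl⟩

end NormalForm

open NormalForm

theorem compl_mkw (w : List (Fin 2)) : compl (mkw w) = (ofWord w).sup := by
  have hmem : (ofWord w).sup ∈ {ℓ | ∃ c, mkw w * c = Δ ^ ℓ} := by
    obtain ⟨c, hc⟩ := evalFactors_dvd_delta_pow (ofWord w).factors
    exact ⟨c, by rw [← eval_ofWord, eval, mul_assoc, ← hc, sup, pow_add]⟩
  refine le_antisymm (Nat.sInf_le hmem) (le_csInf ⟨_, hmem⟩ ?_)
  rintro ℓ ⟨c, hc⟩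
  obtain ⟨u, rfl⟩ := exists_mkw_eq c
  have h : ofWord (w ++ u) = ofWord (deltaWord ℓ) :=
    ofWord_eq_of_mkw_eq (by rw [mkw_append, hc, mkw_deltaWord])
  calc (ofWord w).sup ≤ ((ofWord w).mulWord u).sup := sup_le_sup_mulWord _ u
    _ = ℓ := by
      rw [← ofWord_append, h, ofWord, mulWord_deltaWord admissible_nil]
      simp [sup]

theorem isGreatest_inf_ofWord (w : List (Fin 2)) :
    IsGreatest {d | ∃ c, mkw w = c * Δ ^ d} (ofWord w).inf := by
  refine ⟨?_, ?_⟩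
  · obtain ⟨c, hc⟩ := exists_delta_pow_mul_eq (ofWord w).inf (evalFactors (ofWord w).factors)
    exact ⟨c, by rw [← eval_ofWord, eval, hc]⟩
  · rintro d ⟨c, hc⟩
    obtain ⟨u, rfl⟩ := exists_mkw_eq c
    have h : ofWord w = (ofWord u).mulWord (deltaWord d) := by
      rw [← ofWord_append]
      exact ofWord_eq_of_mkw_eq (by rw [hc, mkw_append, mkw_deltaWord])
    rw [h, mulWord_deltaWord (admissible_ofWord u)]
    exact Nat.le_add_left d _

namespace NormalForm

@[simp]
theorem weight_mk (k : ℕ) (L : List Factor) :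
    (⟨k, L⟩ : NormalForm).weight = 2 * k + L.length := by
  simp only [weight, sup]
  omega

theorem mulGen_of_last_eq {s : Factor} {i : Fin 2} (h : s.last = i) (k : ℕ) (L : List Factor) :
    mulGen ⟨k, s :: L⟩ i = ⟨k, single i :: s :: L⟩ := by
  cases s <;> simp_all [last, mulGen]

theorem mulWord_replicate_of_last_eq {s : Factor} {i : Fin 2} (h : s.last = i) (k e : ℕ)
    (L : List Factor) :
    (⟨k, s :: L⟩ : NormalForm).mulWord (List.replicate e i) =
      ⟨k, List.replicate e (single i) ++ s :: L⟩ := by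
  induction e generalizing s L with
  | zero => rfl
  | succ e ih =>
    rw [List.replicate_succ, mulWord_cons, mulGen_of_last_eq h, ih rfl, List.replicate_succ']
    simp

theorem mulWord_replicate_succ_of_single_rev (k e : ℕ) (i : Fin 2) (T : List Factor) :
    (⟨k, single i.rev :: T⟩ : NormalForm).mulWord (List.replicate (e + 1) i) =
      ⟨k, List.replicate e (single i) ++ double i :: T⟩ := by
  rw [List.replicate_succ, mulWord_cons]
  simp only [mulGen, if_neg (rev_ne_self i)]
  exact mulWord_replicate_of_last_eq rfl k e T

theorem weight_mulGen_le (x : NormalForm) (i : Fin 2) : (x.mulGen i).weight ≤ x.weight + 1 := by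
  obtain ⟨k, _ | ⟨s, L⟩⟩ := x
  · simp [mulGen]
  · rcases s with j | j <;> by_cases hj : j = i <;>
      simp only [mulGen, hj, ↓reduceIte, weight_mk, List.length_cons, List.length_map] <;> omega

theorem weight_mulWord_le (x : NormalForm) (w : List (Fin 2)) :
    (x.mulWord w).weight ≤ x.weight + w.length := by
  induction w generalizing x with
  | nil => simp
  | cons i w ih =>
    have := weight_mulGen_le x i
    have := ih (x.mulGen i)
    simp only [mulWord_cons, List.length_cons]
    omega

theorem weight_mulGen_of_ne (x : NormalForm) (i : Fin 2)
    (h : ∀ L, x.factors ≠ single i.rev :: L) : (x.mulGen i).weight = x.weight + 1 := by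
  obtain ⟨k, _ | ⟨s, L⟩⟩ := x
  · simp [mulGen]
  · rcases s with j | j
    · obtain rfl : j = i := by_contra fun hj => h L (by rw [eq_rev_of_ne hj])
      simp only [mulGen, ↓reduceIte, weight_mk, List.length_cons]
      omega
    · by_cases hj : j = i <;>
        simp only [mulGen, hj, ↓reduceIte, weight_mk, List.length_cons, List.length_map] <;> omega

theorem weight_add_le_weight_mulWord_replicate (x : NormalForm) (i : Fin 2) (e : ℕ) :
    x.weight + e ≤ (x.mulWord (List.replicate e i)).weight + 1 := by
  induction e generalizing x with
  | zero => simp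
  | succ e ih =>
    rw [List.replicate_succ, mulWord_cons]
    by_cases habs : ∃ L, x.factors = single i.rev :: L
    · obtain ⟨L, hL⟩ := habs
      obtain ⟨k, _⟩ := x
      subst hL
      rw [← mulWord_cons, ← List.replicate_succ, mulWord_replicate_succ_of_single_rev]
      simp only [weight_mk, List.length_append, List.length_replicate, List.length_cons]
      omega
    · push Not at habs
      have := weight_mulGen_of_ne x i habs
      have := ih (x.mulGen i)
      omega

theorem weight_add_sum_le (x : NormalForm) (E : List ℕ) :
    x.weight + E.sum ≤ (x.mulWord (wordOfExpSeq E)).weight + E.length := by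
  induction E generalizing x with
  | nil => simp [wordOfExpSeq]
  | cons e E ih =>
    rw [wordOfExpSeq, mulWord_append]
    have := weight_add_le_weight_mulWord_replicate x (letterOf (E.length + 1)) e
    have := ih (x.mulWord (List.replicate e (letterOf (E.length + 1))))
    simp only [List.sum_cons, List.length_cons]
    omega

end NormalForm

theorem letterOf_succ (n : ℕ) : letterOf (n + 1) = (letterOf n).rev := by
  rcases Nat.mod_two_eq_zero_or_one n with h | h <;> simp [letterOf, Nat.add_mod, h]

theorem expAt_cons {e k : ℕ} {E : List ℕ} (hk : k ≤ E.length) :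
    expAt (e :: E) k = expAt E k := by
  rw [expAt, expAt, List.length_cons, show E.length + 1 - k = E.length - k + 1 by omega,
    List.getD_cons_succ]

theorem length_wordOfExpSeq (E : List ℕ) : (wordOfExpSeq E).length = E.sum := by
  induction E with
  | nil => rfl
  | cons e E ih => simp [wordOfExpSeq, ih]

def AboveEmin : List ℕ → Prop
  | [] => True
  | e :: E => emin (E.length + 1) ≤ e ∧ AboveEmin E

theorem aboveEmin_of_forall {E : List ℕ}
    (h : ∀ k, 1 ≤ k → k ≤ E.length → emin k ≤ expAt E k) : AboveEmin E := by
  induction E with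
  | nil => trivial
  | cons e E ih =>
    refine ⟨by simpa [expAt] using h (E.length + 1) (by omega) le_rfl, ih fun k hk hkE => ?_⟩
    rw [← expAt_cons hkE]
    exact h k hk (hkE.trans (Nat.le_succ _))

theorem IsNormalSeq.exists_cons {E : List ℕ} (hE : IsNormalSeq E) :
    ∃ e E', E = e :: E' ∧ 1 ≤ e ∧ AboveEmin E' := by
  obtain ⟨hne, hhead, hmin⟩ := hE
  obtain ⟨e, E', rfl⟩ := List.exists_cons_of_ne_nil hne
  refine ⟨e, E', rfl, by simpa [expAt] using hhead, aboveEmin_of_forall fun k hk hkE => ?_⟩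
  rw [← expAt_cons hkE]
  exact hmin k hk (Nat.lt_succ_of_le hkE)

namespace NormalForm

/-- Every block but the last two has at least two letters, so it leaves a single factor into
which the first letter of the next block is absorbed. -/
theorem weight_mulWord_add_length_le {E : List ℕ} (hE : AboveEmin E) (k : ℕ) (T : List Factor) :
    ((⟨k, single (letterOf (E.length + 1)) :: T⟩ : NormalForm).mulWord (wordOfExpSeq E)).weight
      + E.length ≤ 2 * k + T.length + E.sum + 2 := by
  induction E generalizing T with
  | nil =>
    simp only [wordOfExpSeq, mulWord_nil, weight_mk, List.length_cons, List.length_nil,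
      List.sum_nil]
    omega
  | cons e E ih =>
    obtain ⟨he, hE⟩ := hE
    rw [show letterOf ((e :: E).length + 1) = (letterOf (E.length + 1)).rev from letterOf_succ _]
    rcases E with _ | ⟨f, _ | ⟨g, E⟩⟩
    · refine (Nat.add_le_add_right (weight_mulWord_le _ _) _).trans ?_
      simp only [weight_mk, length_wordOfExpSeq, List.length_cons, List.length_nil, List.sum_cons,
        List.sum_nil]
      omega
    · obtain ⟨e, rfl⟩ := Nat.exists_eq_add_of_le' (show 1 ≤ e from he)
      rw [wordOfExpSeq, mulWord_append, mulWord_replicate_succ_of_single_rev]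
      refine (Nat.add_le_add_right (weight_mulWord_le _ _) _).trans ?_
      simp only [weight_mk, length_wordOfExpSeq, List.length_append, List.length_replicate,
        List.length_cons, List.length_nil, List.sum_cons, List.sum_nil]
      omega
    · obtain ⟨e, rfl⟩ := Nat.exists_eq_add_of_le' (show 2 ≤ e from he)
      set x := letterOf ((f :: g :: E).length + 1)
      rw [wordOfExpSeq, mulWord_append, mulWord_replicate_succ_of_single_rev, List.replicate_succ,
        List.cons_append]
      have := ih hE (List.replicate e (single x) ++ double x :: T)
      simp only [List.length_append, List.length_replicate, List.length_cons, List.sum_cons]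
        at this ⊢
      omega

theorem sum_le_weight_ofWord_add_length (E : List ℕ) :
    E.sum ≤ (ofWord (wordOfExpSeq E)).weight + E.length := by
  simpa [ofWord] using weight_add_sum_le ⟨0, []⟩ E

theorem weight_ofWord_add_length_le {E : List ℕ} (hE : IsNormalSeq E) :
    (ofWord (wordOfExpSeq E)).weight + E.length ≤ E.sum + 2 := by
  obtain ⟨e, E, rfl, he, hrest⟩ := hE.exists_cons
  obtain ⟨e, rfl⟩ := Nat.exists_eq_add_of_le' he
  have := weight_mulWord_add_length_le hrest 0 (List.replicate e (single (letterOf (E.length + 1))))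
  rw [wordOfExpSeq, ofWord_append]
  set x := letterOf (E.length + 1)
  have hfirst :
      ofWord (List.replicate (e + 1) x) = ⟨0, single x :: List.replicate e (single x)⟩ := by
    rw [ofWord, List.replicate_succ, mulWord_cons, mulGen,
      mulWord_replicate_of_last_eq (i := x) rfl, ← List.replicate_succ', List.replicate_succ]
  rw [hfirst]
  simp only [List.sum_cons, List.length_cons, List.length_replicate] at this ⊢
  omega

end NormalForm

/-- ‖b‖ = |b| − p − d(b) + C for some C ∈ {0, 1, 2}, where p is the breadth of b,
|b| = e_p + ⋯ + e_1 is the common length of all words representing b, and d(b)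
is the maximal d with Δ₃^d a right divisor of b. (Stated additively.) -/
theorem compl_formula (b : B3P) (E : List ℕ) (hE : HasExpSeq b E) (d : ℕ)
    (hd : IsGreatest {d | ∃ c, b = c * Δ ^ d} d) :
    ∃ C, C ≤ 2 ∧ compl b + E.length + d = E.sum + C := by
  obtain ⟨hnormal, rfl⟩ := hE
  have hinf : d = (ofWord (wordOfExpSeq E)).inf := hd.unique (isGreatest_inf_ofWord _)
  have hlower := sum_le_weight_ofWord_add_length E
  have hupper := weight_ofWord_add_length_le hnormal
  refine ⟨(ofWord (wordOfExpSeq E)).weight + E.length - E.sum, by omega, ?_⟩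
  rw [compl_mkw, hinf]
  simp only [weight] at hlower hupper ⊢
  omega

end Braid3
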